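/- arXiv:1504.04696 — 2 statements merged into one kernel-verified Lean document; each statement's English description precedes it below -/
import Mathlib

section
/- If ζ ~ χ²_n, then for every z > 0, P(ζ − n ≥ 2√(zn) + 2z) ≤ e^{−z} and P(n − ζ ≥ 2√(zn)) ≤ e^{−z}. -/
/-!
Chernoff's method. For `t < 1/2` the moment generating function of `χ²_n` is
`(1 - 2t)^(-n/2)`, a product of `n` Gaussian integrals. The bound `log y ≤ (y - y⁻¹)/2` for
`y ≥ 1` (that is, `x ≤ sinh x` for `x ≥ 0`) gives `-log(1 - 2t)/2 ≤ t + t²/(1 - 2t)` for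
`0 ≤ t < 1/2`, and `log (1 + u) ≥ 2u/(u + 2)` gives `-log(1 - 2t)/2 ≤ t + t²` for `t ≤ 0`.
So `ζ` is sub-gamma on the right with variance factor `2n` and scale `2`, and sub-Gaussian on the
left with variance factor `2n`, and the Chernoff bound for such variables, evaluated at a
suitable `t`, yields the two tails.
-/

open MeasureTheory ProbabilityTheory

/-- The distribution of a vector of `n` iid standard Gaussians. -/
noncomputable def stdGaussianPi (n : ℕ) : Measure (Fin n → ℝ) :=
  Measure.pi fun _ => gaussianReal 0 1

/-- The chi-squared distribution with `n` degrees of freedom. -/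
noncomputable def chiSquared (n : ℕ) : Measure ℝ :=
  (stdGaussianPi n).map (fun x => ∑ i, (x i) ^ 2)

open Real
open scoped NNReal

lemma integral_exp_mul_sq_gaussianReal {c : ℝ} {v : ℝ≥0} (hc : 2 * c * v < 1) :
    ∫ x, exp (c * x ^ 2) ∂gaussianReal 0 v = (√(1 - 2 * c * v))⁻¹ := by
  rcases eq_or_ne v 0 with rfl | hv
  · simp
  have hv' : (0 : ℝ) < v := by positivity
  have hb : 0 < 1 / (2 * v) - c := by
    rw [sub_pos, lt_div_iff₀ (by positivity)]; linarith
  calc ∫ x, exp (c * x ^ 2) ∂gaussianReal 0 v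
      = ∫ x, (√(2 * π * v))⁻¹ * exp (-(1 / (2 * v) - c) * x ^ 2) := by
        rw [integral_gaussianReal_eq_integral_smul hv]
        congr 1 with x
        rw [gaussianPDFReal, smul_eq_mul, mul_assoc, ← exp_add]
        congr 2
        field_simp
        ring
    _ = (√(1 - 2 * c * v))⁻¹ := by
        rw [integral_const_mul, integral_gaussian, show π / (1 / (2 * v) - c) = 2 * π * v / (1 - 2 * c * v) by
          field_simp]
        rw [sqrt_div (by positivity)]
        have : √(2 * π * v) ≠ 0 := by positivity
        field_simp

lemma integrable_exp_mul_sq_gaussianReal {c : ℝ} {v : ℝ≥0} (hc : 2 * c * v < 1) :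
    Integrable (fun x ↦ exp (c * x ^ 2)) (gaussianReal 0 v) :=
  .of_integral_ne_zero <| by
    rw [integral_exp_mul_sq_gaussianReal hc]
    have : 0 < 1 - 2 * c * v := by linarith
    positivity

lemma log_le_half_sub_inv {y : ℝ} (hy : 1 ≤ y) : log y ≤ (y - y⁻¹) / 2 := by
  rw [← sinh_log (by positivity)]
  exact self_le_sinh_iff.2 (log_nonneg hy)

lemma inv_sqrt_one_sub_two_mul_le_of_nonneg {t : ℝ} (ht₀ : 0 ≤ t) (ht : 2 * t < 1) :
    (√(1 - 2 * t))⁻¹ ≤ exp (t + t ^ 2 / (1 - 2 * t)) := by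
  have hw : 0 < 1 - 2 * t := by linarith
  refine le_exp_of_log_le ?_
  rw [log_inv, log_sqrt hw.le, ← neg_div, ← log_inv]
  calc log (1 - 2 * t)⁻¹ / 2 ≤ ((1 - 2 * t)⁻¹ - (1 - 2 * t)⁻¹⁻¹) / 4 := by
        linarith [log_le_half_sub_inv (one_le_inv₀ hw |>.2 (by linarith))]
    _ = t + t ^ 2 / (1 - 2 * t) := by
        field_simp
        ring

lemma inv_sqrt_one_sub_two_mul_le_of_nonpos {t : ℝ} (ht : t ≤ 0) :
    (√(1 - 2 * t))⁻¹ ≤ exp (t + t ^ 2) := by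
  have hw : 0 < 1 - t := by linarith
  refine le_exp_of_log_le ?_
  rw [log_inv, log_sqrt (by linarith)]
  have h_log := le_log_one_add_of_nonneg (x := -2 * t) (by linarith)
  rw [show 1 + -2 * t = 1 - 2 * t by ring] at h_log
  calc -(log (1 - 2 * t) / 2) ≤ -(2 * (-2 * t) / (-2 * t + 2)) / 2 := by linarith
    _ = t / (1 - t) := by
        rw [show -2 * t + 2 = 2 * (1 - t) by ring]
        field_simp
    _ ≤ t + t ^ 2 := by
        rw [div_le_iff₀ hw]
        nlinarith [pow_two_nonneg t]

theorem measure_ge_le_exp_neg_of_mgf_le {Ω : Type*} [MeasurableSpace Ω] {μ : Measure Ω}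
    [IsFiniteMeasure μ] {X : Ω → ℝ} {m v c z : ℝ} (hv : 0 < v) (hc : 0 ≤ c) (hz : 0 ≤ z)
    (h_int : ∀ t, 0 ≤ t → c * t < 1 → Integrable (fun ω ↦ exp (t * X ω)) μ)
    (h_mgf : ∀ t, 0 ≤ t → c * t < 1 → mgf X μ t ≤ exp (t * m + v * t ^ 2 / (2 * (1 - c * t)))) :
    μ {ω | m + √(2 * v * z) + c * z ≤ X ω} ≤ ENNReal.ofReal (exp (-z)) := by
  set b := √z
  set w := √(2 * v)
  have hw : 0 < w := sqrt_pos.2 (by positivity)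
  have hb : 0 ≤ b := sqrt_nonneg z
  have hden : 0 < w + 2 * c * b := by positivity
  set t := 2 * b / (w + 2 * c * b) with ht_def
  have ht₀ : 0 ≤ t := by positivity
  have hct : c * t < 1 := by
    rw [show c * t = 2 * c * b / (w + 2 * c * b) by ring, div_lt_one hden]
    linarith
  have h_exponent : -t * (m + √(2 * v * z) + c * z) + (t * m + v * t ^ 2 / (2 * (1 - c * t)))
      = -z := by
    have hv' : v = w ^ 2 / 2 := by rw [sq_sqrt (by positivity)]; ring
    have hz' : z = b ^ 2 := (sq_sqrt hz).symm
    have hwb : √(2 * v * z) = w * b := sqrt_mul (by positivity) z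
    have h1 : 1 - c * t = w / (w + 2 * c * b) := by rw [ht_def]; field_simp; ring
    rw [hwb, h1, hz', hv', ht_def]
    field_simp
    ring
  rw [ENNReal.le_ofReal_iff_toReal_le (measure_ne_top _ _) (exp_nonneg _)]
  calc (μ {ω | m + √(2 * v * z) + c * z ≤ X ω}).toReal
      ≤ exp (-t * (m + √(2 * v * z) + c * z)) * mgf X μ t :=
        measure_ge_le_exp_mul_mgf _ ht₀ (h_int t ht₀ hct)
    _ ≤ exp (-t * (m + √(2 * v * z) + c * z)) * exp (t * m + v * t ^ 2 / (2 * (1 - c * t))) := by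
        gcongr; exact h_mgf t ht₀ hct
    _ = exp (-z) := by rw [← exp_add, h_exponent]

theorem measure_le_le_exp_neg_of_mgf_le {Ω : Type*} [MeasurableSpace Ω] {μ : Measure Ω}
    [IsFiniteMeasure μ] {X : Ω → ℝ} {m v z : ℝ} (hv : 0 < v) (hz : 0 ≤ z)
    (h_int : ∀ t ≤ 0, Integrable (fun ω ↦ exp (t * X ω)) μ)
    (h_mgf : ∀ t ≤ 0, mgf X μ t ≤ exp (t * m + v * t ^ 2 / 2)) :
    μ {ω | X ω ≤ m - √(2 * v * z)} ≤ ENNReal.ofReal (exp (-z)) := by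
  set b := √z
  set w := √(2 * v)
  have hw : 0 < w := sqrt_pos.2 (by positivity)
  set t := -2 * b / w with ht_def
  have ht : t ≤ 0 := div_nonpos_of_nonpos_of_nonneg (by linarith [sqrt_nonneg z]) hw.le
  have h_exponent : -t * (m - √(2 * v * z)) + (t * m + v * t ^ 2 / 2) = -z := by
    have hv' : v = w ^ 2 / 2 := by rw [sq_sqrt (by positivity)]; ring
    have hz' : z = b ^ 2 := (sq_sqrt hz).symm
    have hwb : √(2 * v * z) = w * b := sqrt_mul (by positivity) z
    rw [hwb, hz', hv', ht_def]
    field_simp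
    ring
  rw [ENNReal.le_ofReal_iff_toReal_le (measure_ne_top _ _) (exp_nonneg _)]
  calc (μ {ω | X ω ≤ m - √(2 * v * z)}).toReal
      ≤ exp (-t * (m - √(2 * v * z))) * mgf X μ t := measure_le_le_exp_mul_mgf _ ht (h_int t ht)
    _ ≤ exp (-t * (m - √(2 * v * z))) * exp (t * m + v * t ^ 2 / 2) := by
        gcongr; exact h_mgf t ht
    _ = exp (-z) := by rw [← exp_add, h_exponent]

instance isProbabilityMeasure_stdGaussianPi (n : ℕ) : IsProbabilityMeasure (stdGaussianPi n) := by
  unfold stdGaussianPi; infer_instance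

lemma measurable_sum_sq (n : ℕ) : Measurable fun x : Fin n → ℝ ↦ ∑ i, x i ^ 2 := by
  fun_prop

instance isProbabilityMeasure_chiSquared (n : ℕ) : IsProbabilityMeasure (chiSquared n) :=
  Measure.isProbabilityMeasure_map (measurable_sum_sq n).aemeasurable

lemma exp_mul_sum_sq {n : ℕ} (t : ℝ) (x : Fin n → ℝ) :
    exp (t * ∑ i, x i ^ 2) = ∏ i, exp (t * x i ^ 2) := by
  rw [Finset.mul_sum, exp_sum]

lemma integrable_exp_mul_chiSquared (n : ℕ) {t : ℝ} (ht : 2 * t < 1) :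
    Integrable (fun x ↦ exp (t * x)) (chiSquared n) := by
  rw [chiSquared, integrable_map_measure (by fun_prop) (measurable_sum_sq n).aemeasurable]
  simp only [Function.comp_def, exp_mul_sum_sq]
  exact .fintype_prod fun _ ↦ integrable_exp_mul_sq_gaussianReal (by simpa using ht)

lemma mgf_id_chiSquared (n : ℕ) {t : ℝ} (ht : 2 * t < 1) :
    mgf id (chiSquared n) t = (√(1 - 2 * t))⁻¹ ^ n := by
  rw [chiSquared, mgf_map (measurable_sum_sq n).aemeasurable (by fun_prop)]
  simp only [mgf, Function.comp_def, id, exp_mul_sum_sq]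
  rw [stdGaussianPi, integral_fintype_prod_eq_pow (fun y ↦ exp (t * y ^ 2)),
    integral_exp_mul_sq_gaussianReal (by simpa using ht)]
  simp

lemma mgf_id_chiSquared_le_of_nonneg (n : ℕ) {t : ℝ} (ht₀ : 0 ≤ t) (ht : 2 * t < 1) :
    mgf id (chiSquared n) t ≤ exp (t * n + 2 * n * t ^ 2 / (2 * (1 - 2 * t))) := by
  rw [mgf_id_chiSquared n ht]
  calc (√(1 - 2 * t))⁻¹ ^ n ≤ exp (t + t ^ 2 / (1 - 2 * t)) ^ n := by
        gcongr
        exact inv_sqrt_one_sub_two_mul_le_of_nonneg ht₀ ht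
    _ = exp (t * n + 2 * n * t ^ 2 / (2 * (1 - 2 * t))) := by
        rw [← exp_nat_mul]
        congr 1
        field_simp

lemma mgf_id_chiSquared_le_of_nonpos (n : ℕ) {t : ℝ} (ht : t ≤ 0) :
    mgf id (chiSquared n) t ≤ exp (t * n + 2 * n * t ^ 2 / 2) := by
  rw [mgf_id_chiSquared n (by linarith)]
  calc (√(1 - 2 * t))⁻¹ ^ n ≤ exp (t + t ^ 2) ^ n := by
        gcongr
        exact inv_sqrt_one_sub_two_mul_le_of_nonpos ht
    _ = exp (t * n + 2 * n * t ^ 2 / 2) := by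
        rw [← exp_nat_mul]
        ring_nf

/-- Laurent–Massart tail bounds for the chi-squared distribution. -/
theorem chiSq_laurent_massart_tails (n : ℕ) (hn : 0 < n) (z : ℝ) (hz : 0 < z) :
    (chiSquared n) {x | x - n ≥ 2 * Real.sqrt (z * n) + 2 * z}
        ≤ ENNReal.ofReal (Real.exp (-z)) ∧
    (chiSquared n) {x | (n : ℝ) - x ≥ 2 * Real.sqrt (z * n)}
        ≤ ENNReal.ofReal (Real.exp (-z)) := by
  have hv : (0 : ℝ) < 2 * n := by positivity
  have h_sqrt : √(2 * (2 * n) * z) = 2 * √(z * n) := by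
    rw [show 2 * (2 * (n : ℝ)) * z = 2 ^ 2 * (z * n) by ring, sqrt_mul' _ (by positivity),
      sqrt_sq zero_le_two]
  constructor
  · refine (measure_mono fun x hx ↦ ?_).trans <|
      measure_ge_le_exp_neg_of_mgf_le (X := id) (m := n) hv zero_le_two hz.le
        (fun _ _ ht ↦ integrable_exp_mul_chiSquared n ht)
        (fun _ ht₀ ht ↦ mgf_id_chiSquared_le_of_nonneg n ht₀ ht)
    simp only [Set.mem_ofPred_eq, id, h_sqrt] at hx ⊢
    linarith
  · refine (measure_mono fun x hx ↦ ?_).trans <|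
      measure_le_le_exp_neg_of_mgf_le (X := id) (m := n) hv hz.le
        (fun _ ht ↦ integrable_exp_mul_chiSquared n (by linarith))
        (fun _ ht ↦ mgf_id_chiSquared_le_of_nonpos n ht)
    simp only [Set.mem_ofPred_eq, id, h_sqrt] at hx ⊢
    linarith
end

section
/- Let Ω* = B* D^{-1}_{φ*} be a symmetric positive definite matrix with unit-diagonal B* and φ* ∈ (0,∞)^p, and suppose B*_{j1} ≠ 0 for every j ∈ [p]. Then a vector φ ∈ (0,∞)^p is such that B* D^{-1}_{φ} is symmetric positive semidefinite if and only if φ_1 > 0 and φ_j = (B*_{1j}/B*_{j1}) φ_1 for every j ∈ [p]; in that case B* D^{-1}_{φ} = (φ*_1/φ_1) Ω*. -/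
/-!
Symmetry of `B D_φ⁻¹` means `B i j / φ j = B j i / φ i`; reading this off the first row pins
`φ` down up to a scalar: `φ j = (B 0 j / B j 0) φ 0`. Since `Ω* = B D_{φ*}⁻¹` is symmetric, `φ*`
satisfies the same relations, so any admissible `φ` is a positive multiple `c φ*`, whence
`B D_φ⁻¹ = c⁻¹ Ω*`, which is positive semidefinite.
-/

open Matrix

namespace Matrix

variable {n K : Type*} [Fintype n] [DecidableEq n] [Field K]

theorem mul_inv_diagonal_apply (B : Matrix n n K) {v : n → K} (hv : ∀ j, v j ≠ 0) (i j : n) :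
    (B * (diagonal v)⁻¹) i j = B i j / v j := by
  have hunit : IsUnit v := Pi.isUnit_iff.2 fun j => (hv j).isUnit
  simp [inv_diagonal, Ring.inverse, hunit, div_eq_mul_inv]

theorem mul_inv_diagonal_smul (B : Matrix n n K) {v : n → K} (hv : ∀ j, v j ≠ 0) {c : K}
    (hc : c ≠ 0) : B * (diagonal (c • v))⁻¹ = c⁻¹ • (B * (diagonal v)⁻¹) := by
  have hcv : ∀ j, (c • v) j ≠ 0 := fun j => mul_ne_zero hc (hv j)
  ext i j
  rw [smul_apply, mul_inv_diagonal_apply B hcv, mul_inv_diagonal_apply B hv, Pi.smul_apply,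
    smul_eq_mul, smul_eq_mul]
  field_simp

theorem IsSymm.eq_div_mul_of_mul_inv_diagonal {B : Matrix n n K} {v : n → K}
    (hsymm : (B * (diagonal v)⁻¹).IsSymm) (hv : ∀ j, v j ≠ 0) {i j : n} (hB : B j i ≠ 0) :
    v j = B i j / B j i * v i := by
  have hij := hsymm.apply j i
  rw [mul_inv_diagonal_apply B hv, mul_inv_diagonal_apply B hv, div_eq_div_iff (hv j) (hv i)]
    at hij
  field_simp
  linear_combination -hij

end Matrix

theorem eq_smul_of_forall_eq_mul {ι K : Type*} [Field K] {r u v : ι → K} {i₀ : ι}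
    (hu : ∀ j, u j = r j * u i₀) (hv : ∀ j, v j = r j * v i₀) (hv₀ : v i₀ ≠ 0) :
    u = (u i₀ / v i₀) • v := by
  ext j
  rw [Pi.smul_apply, smul_eq_mul, hu j, hv j]
  field_simp

theorem posSemidef_iff_proportional_general (p : ℕ) [NeZero p]
    (B : Matrix (Fin p) (Fin p) ℝ)
    (φs : Fin p → ℝ) (hφs : ∀ j, 0 < φs j)
    (hPD : (B * (Matrix.diagonal φs)⁻¹).PosDef)
    (hB1 : ∀ j, B j 0 ≠ 0)
    (φ : Fin p → ℝ) (hφ : ∀ j, 0 < φ j) :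
    ((B * (Matrix.diagonal φ)⁻¹).PosSemidef ↔
        (0 < φ 0 ∧ ∀ j, φ j = (B 0 j / B j 0) * φ 0)) ∧
      ((B * (Matrix.diagonal φ)⁻¹).PosSemidef →
        B * (Matrix.diagonal φ)⁻¹ = (φs 0 / φ 0) • (B * (Matrix.diagonal φs)⁻¹)) := by
  have hφs_ne : ∀ j, φs j ≠ 0 := fun j => (hφs j).ne'
  have hφs_rel : ∀ j, φs j = B 0 j / B j 0 * φs 0 := fun j =>
    (isHermitian_iff_isSymm.1 hPD.isHermitian).eq_div_mul_of_mul_inv_diagonal hφs_ne (hB1 j)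
  have hscale (hrel : ∀ j, φ j = B 0 j / B j 0 * φ 0) :
      B * (diagonal φ)⁻¹ = (φs 0 / φ 0) • (B * (diagonal φs)⁻¹) := by
    calc B * (diagonal φ)⁻¹ = B * (diagonal ((φ 0 / φs 0) • φs))⁻¹ :=
          congrArg (fun v => B * (diagonal v)⁻¹) (eq_smul_of_forall_eq_mul hrel hφs_rel (hφs_ne 0))
      _ = (φs 0 / φ 0) • (B * (diagonal φs)⁻¹) := by
          rw [mul_inv_diagonal_smul B hφs_ne (div_ne_zero (hφ 0).ne' (hφs_ne 0)), inv_div]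
  have hrel_of_psd (hPSD : (B * (diagonal φ)⁻¹).PosSemidef) :
      ∀ j, φ j = B 0 j / B j 0 * φ 0 := fun j =>
    (isHermitian_iff_isSymm.1 hPSD.isHermitian).eq_div_mul_of_mul_inv_diagonal
      (fun j => (hφ j).ne') (hB1 j)
  refine ⟨⟨fun hPSD => ⟨hφ 0, hrel_of_psd hPSD⟩, fun ⟨_, hrel⟩ => ?_⟩,
    fun hPSD => hscale (hrel_of_psd hPSD)⟩
  rw [hscale hrel]
  exact hPD.posSemidef.smul (div_pos (hφs 0) (hφ 0)).le

/-- If `Ω = B D_{φ*}⁻¹` is symmetric positive definite with unit-diagonal `B` and all the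
entries of the first column of `B` are nonzero, then for a positive vector `φ`, the matrix
`B D_φ⁻¹` is symmetric positive semidefinite iff `φ_1 > 0` and `φ_j = (B_{1j}/B_{j1}) φ_1`
for all `j`; in that case `B D_φ⁻¹ = (φ*_1 / φ_1) Ω`. -/
theorem posSemidef_iff_proportional (p : ℕ) [NeZero p]
    (B : Matrix (Fin p) (Fin p) ℝ) (hBdiag : ∀ j, B j j = 1)
    (φs : Fin p → ℝ) (hφs : ∀ j, 0 < φs j)
    (hPD : (B * (Matrix.diagonal φs)⁻¹).PosDef)
    (hB1 : ∀ j, B j 0 ≠ 0)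
    (φ : Fin p → ℝ) (hφ : ∀ j, 0 < φ j) :
    ((B * (Matrix.diagonal φ)⁻¹).PosSemidef ↔
        (0 < φ 0 ∧ ∀ j, φ j = (B 0 j / B j 0) * φ 0)) ∧
      ((B * (Matrix.diagonal φ)⁻¹).PosSemidef →
        B * (Matrix.diagonal φ)⁻¹ = (φs 0 / φ 0) • (B * (Matrix.diagonal φs)⁻¹)) :=
  posSemidef_iff_proportional_general p B φs hφs hPD hB1 φ hφ
end
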